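/- Let G contain an induced subgraph H isomorphic to the cycle C_{2k}, k ≥ 3, with vertices v_1, …, v_{2k} in cyclic order, where each of v_2, v_4, …, v_{2k} has degree exactly 2 in G. Then gap(G) = gap(G \ V(H)). -/
import Mathlib


structure LoopGraph (V : Type*) where
  Adj : V → V → Prop
  symm : ∀ u v, Adj u v → Adj v u

namespace LoopGraph

variable {V : Type*} [Fintype V] [DecidableEq V]

/-- `C` is a set-join cover of `G`: a finite family of set-joins `K ∨ L`
(with `K`, `L` nonempty) whose edge sets union to `E(G)`. -/
def IsCover (G : LoopGraph V) (C : Finset (Finset V × Finset V)) : Prop :=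
  (∀ p ∈ C, p.1.Nonempty ∧ p.2.Nonempty) ∧
  (∀ u v : V, G.Adj u v ↔ ∃ p ∈ C, (u ∈ p.1 ∧ v ∈ p.2) ∨ (u ∈ p.2 ∧ v ∈ p.1))

/-- The component set of a set-join cover: all sets occurring as a part. -/
def sjComponents (C : Finset (Finset V × Finset V)) : Finset (Finset V) :=
  C.image Prod.fst ∪ C.image Prod.snd

/-- The SNT-rank: minimal number of distinct components over all set-join covers. -/
noncomputable def stp (G : LoopGraph V) : ℕ :=
  sInf {n | ∃ C : Finset (Finset V × Finset V), G.IsCover C ∧ (sjComponents C).card = n}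

/-- `gap G = |V(G)| - stp G`. -/
noncomputable def gap (G : LoopGraph V) : ℕ :=
  Fintype.card V - G.stp

/-- No vertices `u₁ ≠ u₂`, `v₁ ≠ v₂` with all four pairs `{uᵢ, vⱼ}` edges. -/
def StronglyC4Free (G : LoopGraph V) : Prop :=
  ¬ ∃ u₁ u₂ v₁ v₂ : V, u₁ ≠ u₂ ∧ v₁ ≠ v₂ ∧
    G.Adj u₁ v₁ ∧ G.Adj u₁ v₂ ∧ G.Adj u₂ v₁ ∧ G.Adj u₂ v₂

/-- Induced subgraph on a finset of vertices. -/
def induce (G : LoopGraph V) (s : Finset V) : LoopGraph {x // x ∈ s} :=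
  ⟨fun a b => G.Adj a b, fun _ _ h => G.symm _ _ h⟩

/-- Degree of a vertex; a loop counts twice. -/
noncomputable def deg (G : LoopGraph V) (x : V) : ℕ :=
  {y | G.Adj x y}.ncard + {y | y = x ∧ G.Adj x y}.ncard

end LoopGraph

open LoopGraph


lemma exists_cover {V : Type*} [Fintype V] [DecidableEq V] (G : LoopGraph V) :
    ∃ C, G.IsCover C := by
  classical
  refine ⟨(Finset.univ.filter fun p : V × V => G.Adj p.1 p.2).image
      (fun p => ({p.1}, {p.2})), ?_, ?_⟩
  · intro p hp
    simp only [Finset.mem_image] at hp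
    obtain ⟨q, _, rfl⟩ := hp
    exact ⟨⟨q.1, by simp⟩, ⟨q.2, by simp⟩⟩
  · intro u w
    constructor
    · intro h
      exact ⟨({u}, {w}), Finset.mem_image.2 ⟨(u, w), by simpa using h, rfl⟩,
        Or.inl ⟨by simp, by simp⟩⟩
    · rintro ⟨p, hp, h⟩
      simp only [Finset.mem_image, Finset.mem_filter] at hp
      obtain ⟨q, ⟨-, hq⟩, rfl⟩ := hp
      simp only [Finset.mem_singleton] at h
      rcases h with ⟨rfl, rfl⟩ | ⟨rfl, rfl⟩
      · exact hq
      · exact G.symm _ _ hq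

lemma stp_exists {V : Type*} [Fintype V] [DecidableEq V] (G : LoopGraph V) :
    ∃ C, G.IsCover C ∧ (sjComponents C).card = G.stp := by
  have hne : {n | ∃ C : Finset (Finset V × Finset V),
      G.IsCover C ∧ (sjComponents C).card = n}.Nonempty := by
    obtain ⟨C, hC⟩ := exists_cover G
    exact ⟨_, C, hC, rfl⟩
  exact Nat.sInf_mem hne

lemma stp_le {V : Type*} [Fintype V] [DecidableEq V] (G : LoopGraph V)
    {C : Finset (Finset V × Finset V)} (h : G.IsCover C) :
    G.stp ≤ (sjComponents C).card :=
  Nat.sInf_le ⟨C, h, rfl⟩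

lemma sjComponents_union {V : Type*} [Fintype V] [DecidableEq V]
    (C D : Finset (Finset V × Finset V)) :
    sjComponents (C ∪ D) = sjComponents C ∪ sjComponents D := by
  simp only [sjComponents, Finset.image_union]
  ext x; simp; tauto

lemma sjComponents_image {V W : Type*} [Fintype V] [DecidableEq V] [DecidableEq W]
    (C : Finset (Finset V × Finset V)) (f : Finset V → Finset W) :
    sjComponents (C.image fun p => (f p.1, f p.2)) = (sjComponents C).image f := by
  ext x
  simp only [sjComponents, Finset.mem_union, Finset.mem_image]
  constructor
  · rintro (⟨p, ⟨q, hq, rfl⟩, rfl⟩ | ⟨p, ⟨q, hq, rfl⟩, rfl⟩)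
    · exact ⟨q.1, Or.inl ⟨q, hq, rfl⟩, rfl⟩
    · exact ⟨q.2, Or.inr ⟨q, hq, rfl⟩, rfl⟩
  · rintro ⟨K, ⟨q, hq, rfl⟩ | ⟨q, hq, rfl⟩, rfl⟩
    · exact Or.inl ⟨(f q.1, f q.2), ⟨q, hq, rfl⟩, rfl⟩
    · exact Or.inr ⟨(f q.1, f q.2), ⟨q, hq, rfl⟩, rfl⟩

lemma mem_sjComponents_fst {V : Type*} [Fintype V] [DecidableEq V]
    {C : Finset (Finset V × Finset V)} {p : Finset V × Finset V} (hp : p ∈ C) :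
    p.1 ∈ sjComponents C :=
  Finset.mem_union_left _ (Finset.mem_image.2 ⟨p, hp, rfl⟩)

lemma mem_sjComponents_snd {V : Type*} [Fintype V] [DecidableEq V]
    {C : Finset (Finset V × Finset V)} {p : Finset V × Finset V} (hp : p ∈ C) :
    p.2 ∈ sjComponents C :=
  Finset.mem_union_right _ (Finset.mem_image.2 ⟨p, hp, rfl⟩)

section Cycle

variable {V : Type*} [Fintype V] [DecidableEq V] {G : LoopGraph V} {k : ℕ}
  {v : Fin (2 * k) → V}

lemma val_add_one (hk : 3 ≤ k) (i : Fin (2*k)) :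
    haveI : NeZero (2*k) := ⟨by omega⟩
    (i + 1).val = (i.val + 1) % (2*k) := by
  haveI : NeZero (2*k) := ⟨by omega⟩
  rw [Fin.val_add, Fin.val_one', Nat.mod_eq_of_lt (show 1 < 2*k by omega)]

lemma val_sub_one (hk : 3 ≤ k) (i : Fin (2*k)) :
    haveI : NeZero (2*k) := ⟨by omega⟩
    (i - 1).val = (i.val + (2*k - 1)) % (2*k) := by
  haveI : NeZero (2*k) := ⟨by omega⟩
  rw [Fin.sub_def]
  simp only [Fin.val_one', Nat.mod_eq_of_lt (show 1 < 2*k by omega)]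
  rw [Nat.add_comm]

lemma modcase (hk : 3 ≤ k) {a : ℕ} (ha : a < 2*(2*k)) :
    a % (2*k) = if a < 2*k then a else a - 2*k := by
  split
  · exact Nat.mod_eq_of_lt (by omega)
  · rw [Nat.mod_eq_sub_mod (by omega), Nat.mod_eq_of_lt (by omega)]

lemma parmod (hk : 3 ≤ k) (a : ℕ) : (a % (2*k)) % 2 = a % 2 :=
  Nat.mod_mod_of_dvd a ⟨k, rfl⟩

lemma cyc_adj (hk : 3 ≤ k)
    (hind : ∀ i j : Fin (2 * k), G.Adj (v i) (v j) ↔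
      (j.val = (i.val + 1) % (2 * k) ∨ i.val = (j.val + 1) % (2 * k))) :
    haveI : NeZero (2*k) := ⟨by omega⟩
    ∀ i j : Fin (2*k), G.Adj (v i) (v j) ↔ (j = i + 1 ∨ i = j + 1) := by
  haveI : NeZero (2*k) := ⟨by omega⟩
  intro i j
  rw [hind, Fin.ext_iff, Fin.ext_iff, val_add_one hk, val_add_one hk]

lemma cyc_nbr (hk : 3 ≤ k) (hinj : Function.Injective v)
    (hind : ∀ i j : Fin (2 * k), G.Adj (v i) (v j) ↔
      (j.val = (i.val + 1) % (2 * k) ∨ i.val = (j.val + 1) % (2 * k)))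
    (hdeg : ∀ i : Fin (2 * k), i.val % 2 = 1 → G.deg (v i) = 2) :
    haveI : NeZero (2*k) := ⟨by omega⟩
    ∀ (i : Fin (2*k)), i.val % 2 = 1 → ∀ y : V,
      (G.Adj (v i) y ↔ (y = v (i + 1) ∨ y = v (i - 1))) := by
  haveI : NeZero (2*k) := ⟨by omega⟩
  intro i hi y
  have hadj := cyc_adj hk hind
  have hne : i + 1 ≠ i - 1 := by
    intro h
    have := Fin.ext_iff.1 h
    rw [val_add_one hk, val_sub_one hk] at this
    rw [modcase hk (by omega), modcase hk (by omega)] at this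
    split_ifs at this <;> omega
  have h1 : G.Adj (v i) (v (i + 1)) := (hadj i (i+1)).2 (Or.inl rfl)
  have h2 : G.Adj (v i) (v (i - 1)) := (hadj i (i-1)).2 (Or.inr (by rw [sub_add_cancel]))
  constructor
  · intro hy
    by_contra hcon
    push_neg at hcon
    obtain ⟨hy1, hy2⟩ := hcon
    have hsub : ({y, v (i+1), v (i-1)} : Set V) ⊆ {z | G.Adj (v i) z} := by
      rintro z (rfl | rfl | rfl)
      exacts [hy, h1, h2]
    have hcard : ({y, v (i+1), v (i-1)} : Set V).ncard = 3 := by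
      rw [Set.ncard_insert_of_notMem (by
        simp only [Set.mem_insert_iff, Set.mem_singleton_iff]
        push_neg
        exact ⟨hy1, hy2⟩) (Set.toFinite _),
        Set.ncard_pair (fun h => hne (hinj h))]
    have hle : 3 ≤ ({z | G.Adj (v i) z} : Set V).ncard := by
      rw [← hcard]
      exact Set.ncard_le_ncard hsub (Set.toFinite _)
    have hd := hdeg i hi
    unfold LoopGraph.deg at hd
    omega
  · rintro (rfl | rfl)
    exacts [h1, h2]

lemma odd_adj_parity (hk : 3 ≤ k) (i : Fin (2*k)) (hi : i.val % 2 = 1) :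
    haveI : NeZero (2*k) := ⟨by omega⟩
    (i + 1).val % 2 = 0 ∧ (i - 1).val % 2 = 0 := by
  haveI : NeZero (2*k) := ⟨by omega⟩
  rw [val_add_one hk, val_sub_one hk, parmod hk, parmod hk]
  omega

end Cycle

lemma stp_upper {V : Type*} [Fintype V] [DecidableEq V] (G : LoopGraph V)
    (k : ℕ) (hk : 3 ≤ k)
    (v : Fin (2 * k) → V) (hinj : Function.Injective v)
    (hind : ∀ i j : Fin (2 * k), G.Adj (v i) (v j) ↔
      (j.val = (i.val + 1) % (2 * k) ∨ i.val = (j.val + 1) % (2 * k)))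
    (hdeg : ∀ i : Fin (2 * k), i.val % 2 = 1 → G.deg (v i) = 2) :
    G.stp ≤ (G.induce ((Finset.univ.image v)ᶜ : Finset V)).stp + 2 * k := by
  classical
  haveI : NeZero (2*k) := ⟨by omega⟩
  set S : Finset V := Finset.univ.image v with hS
  set T : Finset V := Sᶜ with hT
  obtain ⟨C', hC', hcard'⟩ := stp_exists (G.induce T)
  set lift : Finset {x // x ∈ T} → Finset V :=
    (fun s => s.map ⟨Subtype.val, Subtype.val_injective⟩) with hlift
  set Nf : Fin (2*k) → Finset V :=
    (fun i => Finset.univ.filter (fun y => G.Adj (v i) y)) with hNf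
  set Ein : Fin k → Fin (2*k) := (fun j => ⟨2*j.val, by omega⟩) with hEin
  set C1 := C'.image (fun p => (lift p.1, lift p.2)) with hC1
  set C2 := (Finset.univ : Finset (Fin k)).image
    (fun j => (({v (Ein j)} : Finset V), Nf (Ein j))) with hC2
  have hadj := cyc_adj hk hind
  have hScase : ∀ u w : V, G.Adj u w → u ∈ S →
      ∃ p ∈ C2, (u ∈ p.1 ∧ w ∈ p.2) ∨ (u ∈ p.2 ∧ w ∈ p.1) := by
    intro u w huw hu
    obtain ⟨i, -, rfl⟩ := Finset.mem_image.1 hu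
    rcases Nat.mod_two_eq_zero_or_one i.val with he | ho
    · have hEi : Ein ⟨i.val/2, by omega⟩ = i := Fin.ext (by simp only [hEin]; omega)
      refine ⟨_, Finset.mem_image.2 ⟨⟨i.val/2, by omega⟩, Finset.mem_univ _, rfl⟩,
        Or.inl ⟨?_, ?_⟩⟩
      · rw [hEi]; exact Finset.mem_singleton_self _
      · rw [hEi]
        simp only [hNf, Finset.mem_filter, Finset.mem_univ, true_and]
        exact huw
    · obtain ⟨hp1, hp2⟩ := odd_adj_parity hk i ho
      have hw := (cyc_nbr hk hinj hind hdeg i ho w).1 huw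
      rcases hw with rfl | rfl
      · have hlt1 := (i+1).isLt
        have hEi : Ein ⟨(i+1).val/2, by omega⟩ = i + 1 := Fin.ext (by
          simp only [hEin]; omega)
        refine ⟨_, Finset.mem_image.2 ⟨⟨(i+1).val/2, by omega⟩, Finset.mem_univ _, rfl⟩,
          Or.inr ⟨?_, ?_⟩⟩
        · rw [hEi]
          simp only [hNf, Finset.mem_filter, Finset.mem_univ, true_and]
          exact (hadj (i+1) i).2 (Or.inr rfl)
        · rw [hEi]; exact Finset.mem_singleton_self _
      · have hlt1 := (i-1).isLt
        have hEi : Ein ⟨(i-1).val/2, by omega⟩ = i - 1 := Fin.ext (by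
          simp only [hEin]; omega)
        refine ⟨_, Finset.mem_image.2 ⟨⟨(i-1).val/2, by omega⟩, Finset.mem_univ _, rfl⟩,
          Or.inr ⟨?_, ?_⟩⟩
        · rw [hEi]
          simp only [hNf, Finset.mem_filter, Finset.mem_univ, true_and]
          exact (hadj (i-1) i).2 (Or.inl (by rw [sub_add_cancel]))
        · rw [hEi]; exact Finset.mem_singleton_self _
  have hcov : G.IsCover (C1 ∪ C2) := by
    constructor
    · intro p hp
      rcases Finset.mem_union.1 hp with h | h
      · obtain ⟨q, hq, rfl⟩ := Finset.mem_image.1 h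
        obtain ⟨h1, h2⟩ := hC'.1 q hq
        exact ⟨h1.map, h2.map⟩
      · obtain ⟨j, -, rfl⟩ := Finset.mem_image.1 h
        refine ⟨⟨_, Finset.mem_singleton_self _⟩, ⟨v (Ein j + 1), ?_⟩⟩
        simp only [hNf, Finset.mem_filter, Finset.mem_univ, true_and]
        exact (hadj _ _).2 (Or.inl rfl)
    · intro u w
      constructor
      · intro huw
        by_cases hu : u ∈ S
        · obtain ⟨p, hp, hor⟩ := hScase u w huw hu
          exact ⟨p, Finset.mem_union_right _ hp, hor⟩
        · by_cases hw : w ∈ S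
          · obtain ⟨p, hp, hor⟩ := hScase w u (G.symm _ _ huw) hw
            exact ⟨p, Finset.mem_union_right _ hp, hor.symm.imp And.symm And.symm⟩
          · have hu' : u ∈ T := Finset.mem_compl.2 hu
            have hw' : w ∈ T := Finset.mem_compl.2 hw
            obtain ⟨q, hq, hor⟩ := ((hC'.2 ⟨u, hu'⟩ ⟨w, hw'⟩).1 huw)
            refine ⟨(lift q.1, lift q.2),
              Finset.mem_union_left _ (Finset.mem_image.2 ⟨q, hq, rfl⟩), ?_⟩
            rcases hor with ⟨h1, h2⟩ | ⟨h1, h2⟩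
            · exact Or.inl ⟨Finset.mem_map_of_mem _ h1, Finset.mem_map_of_mem _ h2⟩
            · exact Or.inr ⟨Finset.mem_map_of_mem _ h1, Finset.mem_map_of_mem _ h2⟩
      · rintro ⟨p, hp, hor⟩
        rcases Finset.mem_union.1 hp with h | h
        · obtain ⟨q, hq, rfl⟩ := Finset.mem_image.1 h
          rcases hor with ⟨h1, h2⟩ | ⟨h1, h2⟩
          · obtain ⟨a, ha, rfl⟩ := Finset.mem_map.1 h1
            obtain ⟨b, hb, rfl⟩ := Finset.mem_map.1 h2
            exact (hC'.2 a b).2 ⟨q, hq, Or.inl ⟨ha, hb⟩⟩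
          · obtain ⟨a, ha, rfl⟩ := Finset.mem_map.1 h1
            obtain ⟨b, hb, rfl⟩ := Finset.mem_map.1 h2
            exact G.symm _ _ ((hC'.2 b a).2 ⟨q, hq, Or.inl ⟨hb, ha⟩⟩)
        · obtain ⟨j, -, rfl⟩ := Finset.mem_image.1 h
          rcases hor with ⟨h1, h2⟩ | ⟨h1, h2⟩
          · rw [Finset.mem_singleton] at h1
            simp only [hNf, Finset.mem_filter, Finset.mem_univ, true_and] at h2
            exact h1 ▸ h2
          · rw [Finset.mem_singleton] at h2
            simp only [hNf, Finset.mem_filter, Finset.mem_univ, true_and] at h1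
            exact G.symm _ _ (h2 ▸ h1)
  have hb1 : (sjComponents C1).card ≤ (G.induce T).stp := by
    rw [hC1, sjComponents_image]
    calc ((sjComponents C').image lift).card ≤ (sjComponents C').card :=
          Finset.card_image_le
      _ = (G.induce T).stp := hcard'
  have hb2 : (sjComponents C2).card ≤ 2 * k := by
    have : sjComponents C2 ⊆
        ((Finset.univ : Finset (Fin k)).image (fun j => ({v (Ein j)} : Finset V))) ∪
        ((Finset.univ : Finset (Fin k)).image (fun j => Nf (Ein j))) := by
      intro K hK
      rcases Finset.mem_union.1 hK with h | h <;>
        obtain ⟨p, hp, rfl⟩ := Finset.mem_image.1 h <;>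
        obtain ⟨j, -, rfl⟩ := Finset.mem_image.1 hp
      · exact Finset.mem_union_left _ (Finset.mem_image.2 ⟨j, Finset.mem_univ _, rfl⟩)
      · exact Finset.mem_union_right _ (Finset.mem_image.2 ⟨j, Finset.mem_univ _, rfl⟩)
    calc (sjComponents C2).card ≤ _ := Finset.card_le_card this
      _ ≤ _ + _ := Finset.card_union_le _ _
      _ ≤ k + k := Nat.add_le_add
          (le_trans Finset.card_image_le (by simp))
          (le_trans Finset.card_image_le (by simp))
      _ = 2 * k := by omega
  calc G.stp ≤ (sjComponents (C1 ∪ C2)).card := stp_le G hcov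
    _ ≤ (sjComponents C1).card + (sjComponents C2).card := by
        rw [sjComponents_union]; exact Finset.card_union_le _ _
    _ ≤ (G.induce T).stp + 2 * k := Nat.add_le_add hb1 hb2

lemma fin_eq_succ_val {k : ℕ} (hk : 3 ≤ k) {x y : Fin (2*k)}
    (h : x = haveI : NeZero (2*k) := ⟨by omega⟩; y + 1) :
    x.val = y.val + 1 ∨ (x.val = 0 ∧ y.val = 2*k - 1) := by
  haveI : NeZero (2*k) := ⟨by omega⟩
  have hy := y.isLt
  have hv := Fin.ext_iff.1 h
  rw [val_add_one hk] at hv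
  rw [modcase hk (by omega)] at hv
  split_ifs at hv <;> omega

lemma stp_lower {V : Type*} [Fintype V] [DecidableEq V] (G : LoopGraph V)
    (k : ℕ) (hk : 3 ≤ k)
    (v : Fin (2 * k) → V) (hinj : Function.Injective v)
    (hind : ∀ i j : Fin (2 * k), G.Adj (v i) (v j) ↔
      (j.val = (i.val + 1) % (2 * k) ∨ i.val = (j.val + 1) % (2 * k)))
    (hdeg : ∀ i : Fin (2 * k), i.val % 2 = 1 → G.deg (v i) = 2) :
    (G.induce ((Finset.univ.image v)ᶜ : Finset V)).stp + 2 * k ≤ G.stp := by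
  classical
  haveI : NeZero (2*k) := ⟨by omega⟩
  set S : Finset V := Finset.univ.image v with hS
  set T : Finset V := Sᶜ with hT
  obtain ⟨C, hC, hcard⟩ := stp_exists G
  have hadj := cyc_adj hk hind
  set Oi : Fin k → Fin (2*k) := (fun j => ⟨2*j.val+1, by omega⟩) with hOi
  set Ei : Fin k → Fin (2*k) := (fun j => ⟨2*j.val, by omega⟩) with hEi
  have hOval : ∀ j, (Oi j).val = 2*j.val+1 := fun j => by simp [hOi]
  have hEval : ∀ j, (Ei j).val = 2*j.val := fun j => by simp [hEi]
  have hOE : ∀ j, Oi j = Ei j + 1 := by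
    intro j
    apply Fin.ext
    rw [val_add_one hk, hOval, hEval, Nat.mod_eq_of_lt (by have := j.isLt; omega)]
  have hOodd : ∀ j, (Oi j).val % 2 = 1 := fun j => by rw [hOval]; omega
  have hvS : ∀ i : Fin (2*k), v i ∈ S := fun i =>
    Finset.mem_image.2 ⟨i, Finset.mem_univ _, rfl⟩
  -- choose the pairs covering the edges (Oi j, Ei j)
  have key : ∀ j : Fin k, ∃ A B : Finset V,
      A ∈ sjComponents C ∧ B ∈ sjComponents C ∧ v (Oi j) ∈ A ∧ v (Ei j) ∈ B ∧
      (∀ a ∈ A, ∀ b ∈ B, G.Adj a b) := by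
    intro j
    have hadj1 : G.Adj (v (Oi j)) (v (Ei j)) := (hadj _ _).2 (Or.inr (hOE j))
    obtain ⟨p, hp, hor⟩ := (hC.2 _ _).1 hadj1
    have hcross : ∀ a ∈ p.1, ∀ b ∈ p.2, G.Adj a b := fun a ha b hb =>
      (hC.2 a b).2 ⟨p, hp, Or.inl ⟨ha, hb⟩⟩
    rcases hor with ⟨h1, h2⟩ | ⟨h1, h2⟩
    · exact ⟨p.1, p.2, mem_sjComponents_fst hp, mem_sjComponents_snd hp, h1, h2, hcross⟩
    · exact ⟨p.2, p.1, mem_sjComponents_snd hp, mem_sjComponents_fst hp, h1, h2,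
        fun a ha b hb => G.symm _ _ (hcross b hb a ha)⟩
  choose A B hAc hBc hOA hEB hcross using key
  have hBsub : ∀ j, ∀ b ∈ B j, b = v (Oi j + 1) ∨ b = v (Ei j) := by
    intro j b hb
    have hb' : G.Adj (v (Oi j)) b := hcross j _ (hOA j) b hb
    rcases (cyc_nbr hk hinj hind hdeg (Oi j) (hOodd j) b).1 hb' with h | h
    · exact Or.inl h
    · refine Or.inr ?_
      rw [h]
      congr 1
      rw [hOE, add_sub_cancel_right]
  have hBS : ∀ j, ∀ b ∈ B j, b ∈ S := by
    intro j b hb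
    rcases hBsub j b hb with rfl | rfl <;> exact hvS _
  have hAadj : ∀ j, ∀ a ∈ A j, G.Adj a (v (Ei j)) := fun j a ha =>
    hcross j a ha _ (hEB j)
  -- distinctness
  have hAinj : Function.Injective A := by
    intro j j' h
    have hj := j.isLt; have hj' := j'.isLt
    have h1 : G.Adj (v (Oi j')) (v (Ei j)) := hAadj j (v (Oi j')) (by rw [h]; exact hOA j')
    have h2 : G.Adj (v (Oi j)) (v (Ei j')) := hAadj j' (v (Oi j)) (by rw [← h]; exact hOA j)
    apply Fin.ext
    rcases (hadj _ _).1 h1 with he | he <;> rcases (hadj _ _).1 h2 with hf | hf <;>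
      [have e1 := fin_eq_succ_val hk he; have e1 := fin_eq_succ_val hk he;
       have e1 := fin_eq_succ_val hk he; have e1 := fin_eq_succ_val hk he] <;>
      [have e2 := fin_eq_succ_val hk hf; have e2 := fin_eq_succ_val hk hf;
       have e2 := fin_eq_succ_val hk hf; have e2 := fin_eq_succ_val hk hf] <;>
      simp only [hOval, hEval] at e1 e2 <;> omega
  have hBinj : Function.Injective B := by
    intro j j' h
    have hj := j.isLt; have hj' := j'.isLt
    have h1 : v (Ei j) ∈ B j' := by rw [← h]; exact hEB j
    have h2 : v (Ei j') ∈ B j := by rw [h]; exact hEB j'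
    apply Fin.ext
    rcases hBsub j' _ h1 with he | he <;> rcases hBsub j _ h2 with hf | hf <;>
      have e1 := hinj he <;> have e2 := hinj hf
    · have f1 := fin_eq_succ_val hk e1
      have f2 := fin_eq_succ_val hk e2
      simp only [hOval, hEval] at f1 f2
      omega
    · have f1 := fin_eq_succ_val hk e1
      have f2 := Fin.ext_iff.1 e2
      simp only [hOval, hEval] at f1 f2
      omega
    · have f1 := Fin.ext_iff.1 e1
      have f2 := fin_eq_succ_val hk e2
      simp only [hOval, hEval] at f1 f2
      omega
    · have f1 := Fin.ext_iff.1 e1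
      have f2 := Fin.ext_iff.1 e2
      simp only [hOval, hEval] at f1 f2
      omega
  have hABne : ∀ j j', A j ≠ B j' := by
    intro j j' h
    have hj := j.isLt; have hj' := j'.isLt
    have h1 : v (Oi j) ∈ B j' := by rw [← h]; exact hOA j
    rcases hBsub j' _ h1 with he | he <;> have e1 := hinj he
    · have f1 := fin_eq_succ_val hk e1
      simp only [hOval, hEval] at f1
      omega
    · have f1 := Fin.ext_iff.1 e1
      simp only [hOval, hEval] at f1
      omega
  -- the set of dead components
  set D : Finset (Finset V) :=
    (Finset.univ.image A) ∪ (Finset.univ.image B) with hD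
  have hDsub : D ⊆ sjComponents C := by
    intro K hK
    rcases Finset.mem_union.1 hK with h | h <;> obtain ⟨j, -, rfl⟩ := Finset.mem_image.1 h
    · exact hAc j
    · exact hBc j
  have hDcard : D.card = 2 * k := by
    rw [hD, Finset.card_union_of_disjoint, Finset.card_image_of_injective _ hAinj,
      Finset.card_image_of_injective _ hBinj]
    · simp only [Finset.card_univ, Fintype.card_fin]; omega
    · rw [Finset.disjoint_left]
      rintro K hKA hKB
      obtain ⟨j, -, rfl⟩ := Finset.mem_image.1 hKA
      obtain ⟨j', -, hB'⟩ := Finset.mem_image.1 hKB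
      exact hABne j j' hB'.symm
  -- dead-side facts
  have hodd1 : ∀ p ∈ C, ∀ j : Fin k, v (Oi j) ∈ p.1 → ∀ b ∈ p.2, b ∈ S := by
    intro p hp j hmem b hb
    have hb' : G.Adj (v (Oi j)) b := (hC.2 _ _).2 ⟨p, hp, Or.inl ⟨hmem, hb⟩⟩
    rcases (cyc_nbr hk hinj hind hdeg (Oi j) (hOodd j) b).1 hb' with rfl | rfl <;> exact hvS _
  have hodd2 : ∀ p ∈ C, ∀ j : Fin k, v (Oi j) ∈ p.2 → ∀ b ∈ p.1, b ∈ S := by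
    intro p hp j hmem b hb
    have hb' : G.Adj (v (Oi j)) b := (hC.2 _ _).2 ⟨p, hp, Or.inr ⟨hmem, hb⟩⟩
    rcases (cyc_nbr hk hinj hind hdeg (Oi j) (hOodd j) b).1 hb' with rfl | rfl <;> exact hvS _
  -- restricted cover
  set emb : {x // x ∈ T} ↪ V := Function.Embedding.subtype _ with hemb
  set res : Finset V → Finset {x // x ∈ T} :=
    (fun s => (s ∩ T).subtype (fun x => x ∈ T)) with hres
  set Csur := C.filter (fun p => (p.1 ∩ T).Nonempty ∧ (p.2 ∩ T).Nonempty) with hCsur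
  set C2 := Csur.image (fun p => (res p.1, res p.2)) with hC2
  have hresmem : ∀ (s : Finset V) (a : {x // x ∈ T}), a ∈ res s ↔ a.val ∈ s := by
    intro s a
    simp only [hres, Finset.mem_subtype, Finset.mem_inter]
    exact ⟨fun h => h.1, fun h => ⟨h, a.2⟩⟩
  have hcov2 : (G.induce T).IsCover C2 := by
    constructor
    · intro p hp
      obtain ⟨q, hq, rfl⟩ := Finset.mem_image.1 hp
      obtain ⟨-, ⟨x, hx⟩, ⟨y, hy⟩⟩ := Finset.mem_filter.1 hq
      exact ⟨⟨⟨x, (Finset.mem_inter.1 hx).2⟩, (hresmem _ _).2 (Finset.mem_inter.1 hx).1⟩,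
        ⟨⟨y, (Finset.mem_inter.1 hy).2⟩, (hresmem _ _).2 (Finset.mem_inter.1 hy).1⟩⟩
    · intro a b
      constructor
      · intro hab
        obtain ⟨p, hp, hor⟩ := (hC.2 a.val b.val).1 hab
        have hpsur : p ∈ Csur := by
          rw [hCsur, Finset.mem_filter]
          rcases hor with ⟨h1, h2⟩ | ⟨h1, h2⟩
          · exact ⟨hp, ⟨a.val, Finset.mem_inter.2 ⟨h1, a.2⟩⟩,
              ⟨b.val, Finset.mem_inter.2 ⟨h2, b.2⟩⟩⟩
          · exact ⟨hp, ⟨b.val, Finset.mem_inter.2 ⟨h2, b.2⟩⟩,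
              ⟨a.val, Finset.mem_inter.2 ⟨h1, a.2⟩⟩⟩
        refine ⟨(res p.1, res p.2), Finset.mem_image.2 ⟨p, hpsur, rfl⟩, ?_⟩
        rcases hor with ⟨h1, h2⟩ | ⟨h1, h2⟩
        · exact Or.inl ⟨(hresmem _ _).2 h1, (hresmem _ _).2 h2⟩
        · exact Or.inr ⟨(hresmem _ _).2 h1, (hresmem _ _).2 h2⟩
      · rintro ⟨p2, hp2, hor⟩
        obtain ⟨q, hq, rfl⟩ := Finset.mem_image.1 hp2
        have hqC : q ∈ C := (Finset.mem_filter.1 hq).1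
        rcases hor with ⟨h1, h2⟩ | ⟨h1, h2⟩
        · exact (hC.2 a.val b.val).2 ⟨q, hqC,
            Or.inl ⟨(hresmem _ _).1 h1, (hresmem _ _).1 h2⟩⟩
        · exact (hC.2 a.val b.val).2 ⟨q, hqC,
            Or.inr ⟨(hresmem _ _).1 h1, (hresmem _ _).1 h2⟩⟩
  -- every component of C2 comes from a component of C outside D
  have hressimp : ∀ s : Finset V, (res s).map emb = s ∩ T := by
    intro s
    rw [hres, hemb, Finset.subtype_map, Finset.filter_true_of_mem]
    intro x hx
    exact (Finset.mem_inter.1 hx).2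
  have hmain : ∀ K ∈ sjComponents C2, ∃ K0 ∈ sjComponents C \ D, K0 ∩ T = K.map emb := by
    intro K hK
    have hgen : ∀ (q : Finset V × Finset V), q ∈ Csur →
        ∀ (s o : Finset V), (s = q.1 ∧ o = q.2) ∨ (s = q.2 ∧ o = q.1) →
        s ∈ sjComponents C → s ∉ D := by
      rintro q hq s o hso hsC hsD
      obtain ⟨hqC, hq1, hq2⟩ := Finset.mem_filter.1 hq
      rcases Finset.mem_union.1 hsD with h | h
      · obtain ⟨j, -, rfl⟩ := Finset.mem_image.1 h
        -- s = A j contains v (Oi j); the other side of q is inside S, contradiction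
        rcases hso with ⟨h1, h2⟩ | ⟨h1, h2⟩
        · have hmem : v (Oi j) ∈ q.1 := h1 ▸ hOA j
          obtain ⟨y, hy⟩ := hq2
          obtain ⟨hy1, hy2⟩ := Finset.mem_inter.1 hy
          exact (Finset.mem_compl.1 hy2) (hodd1 q hqC j hmem y hy1)
        · have hmem : v (Oi j) ∈ q.2 := h1 ▸ hOA j
          obtain ⟨y, hy⟩ := hq1
          obtain ⟨hy1, hy2⟩ := Finset.mem_inter.1 hy
          exact (Finset.mem_compl.1 hy2) (hodd2 q hqC j hmem y hy1)
      · obtain ⟨j, -, rfl⟩ := Finset.mem_image.1 h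
        -- s = B j ⊆ S, but s ∩ T nonempty
        rcases hso with ⟨h1, -⟩ | ⟨h1, -⟩
        · obtain ⟨y, hy⟩ := hq1
          obtain ⟨hy1, hy2⟩ := Finset.mem_inter.1 hy
          exact (Finset.mem_compl.1 hy2) (hBS j y (h1 ▸ hy1))
        · obtain ⟨y, hy⟩ := hq2
          obtain ⟨hy1, hy2⟩ := Finset.mem_inter.1 hy
          exact (Finset.mem_compl.1 hy2) (hBS j y (h1 ▸ hy1))
    rcases Finset.mem_union.1 hK with h | h
    · obtain ⟨p2, hp2, rfl⟩ := Finset.mem_image.1 h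
      obtain ⟨q, hq, rfl⟩ := Finset.mem_image.1 hp2
      have hqC : q ∈ C := (Finset.mem_filter.1 hq).1
      refine ⟨q.1, Finset.mem_sdiff.2 ⟨mem_sjComponents_fst hqC,
        hgen q hq q.1 q.2 (Or.inl ⟨rfl, rfl⟩) (mem_sjComponents_fst hqC)⟩, ?_⟩
      rw [hressimp]
    · obtain ⟨p2, hp2, rfl⟩ := Finset.mem_image.1 h
      obtain ⟨q, hq, rfl⟩ := Finset.mem_image.1 hp2
      have hqC : q ∈ C := (Finset.mem_filter.1 hq).1
      refine ⟨q.2, Finset.mem_sdiff.2 ⟨mem_sjComponents_snd hqC,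
        hgen q hq q.2 q.1 (Or.inr ⟨rfl, rfl⟩) (mem_sjComponents_snd hqC)⟩, ?_⟩
      rw [hressimp]
  -- cardinality chain
  have hcard2 : (sjComponents C2).card ≤ (sjComponents C \ D).card := by
    set f : Finset {x // x ∈ T} → Finset V :=
      (fun K => if h : ∃ K0 ∈ sjComponents C \ D, K0 ∩ T = K.map emb
        then h.choose else ∅) with hf
    have hfspec : ∀ K ∈ sjComponents C2,
        f K ∈ sjComponents C \ D ∧ f K ∩ T = K.map emb := by
      intro K hK
      have h := hmain K hK
      rw [hf]
      simp only [dif_pos h]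
      exact ⟨h.choose_spec.1, h.choose_spec.2⟩
    apply Finset.card_le_card_of_injOn f (fun K hK => (hfspec K hK).1)
    intro K1 h1 K2 h2 he
    have e1 := (hfspec K1 h1).2
    have e2 := (hfspec K2 h2).2
    rw [he, e2] at e1
    exact Finset.map_injective emb e1.symm
  have hstp2 : (G.induce T).stp ≤ (sjComponents C2).card := stp_le _ hcov2
  have hsd : (sjComponents C \ D).card + 2 * k = (sjComponents C).card := by
    rw [← hDcard]
    exact Finset.card_sdiff_add_card_eq_card hDsub
  calc (G.induce T).stp + 2 * k ≤ (sjComponents C \ D).card + 2 * k :=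
        Nat.add_le_add_right (le_trans hstp2 hcard2) _
    _ = (sjComponents C).card := hsd
    _ = G.stp := hcard



/-- If `G` contains an induced `2k`-cycle (`k ≥ 3`) on vertices
`v 0, …, v (2k-1)` (in cyclic order) such that every other vertex of the cycle
has degree exactly `2` in `G`, then `gap G = gap (G \ V(H))`. -/
theorem stmt_8 {V : Type*} [Fintype V] [DecidableEq V] (G : LoopGraph V)
    (k : ℕ) (hk : 3 ≤ k)
    (v : Fin (2 * k) → V) (hinj : Function.Injective v)
    (hind : ∀ i j : Fin (2 * k), G.Adj (v i) (v j) ↔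
      (j.val = (i.val + 1) % (2 * k) ∨ i.val = (j.val + 1) % (2 * k)))
    (hdeg : ∀ i : Fin (2 * k), i.val % 2 = 1 → G.deg (v i) = 2) :
    G.gap = (G.induce ((Finset.univ.image v)ᶜ : Finset V)).gap := by
  have h1 := stp_upper G k hk v hinj hind hdeg
  have h2 := stp_lower G k hk v hinj hind hdeg
  have hstp : G.stp = (G.induce ((Finset.univ.image v)ᶜ : Finset V)).stp + 2 * k :=
    le_antisymm h1 h2
  have hcardS : (Finset.univ.image v).card = 2 * k := by
    rw [Finset.card_image_of_injective _ hinj, Finset.card_univ, Fintype.card_fin]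
  have hcardW : Fintype.card {x // x ∈ ((Finset.univ.image v)ᶜ : Finset V)} =
      Fintype.card V - 2 * k := by
    rw [Fintype.card_coe, Finset.card_compl, hcardS]
  have hgap : ∀ (inst : Fintype {x // x ∈ ((Finset.univ.image v)ᶜ : Finset V)}),
      @Fintype.card _ inst = Fintype.card V - 2 * k := by
    intro inst
    rw [Subsingleton.elim inst (Subtype.fintype _)]
    exact hcardW
  unfold LoopGraph.gap
  rw [hstp, hgap _]
  omega
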